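/- Let V₁, V₂ : E → E be continuous vector fields, let X₁ be a global flow of V₁, and let X₂ be a global flow of V₂ which is continuously differentiable as a map ℝ × E → E and satisfies the group property X₂(t + s, y) = X₂(t, X₂(s, y)). Fix t ∈ ℝ and y ∈ E, and define F(s) = X₂(t − s, X₁(s, y)). Then for every s ∈ ℝ, F is differentiable at s with F′(s) = D_yX₂(t − s, X₁(s, y))((V₁ − V₂)(X₁(s, y))). -/

import Mathlib

/-! Differentiating the group identity `X₂ (τ + u, z) = X₂ (τ, X₂ (u, z))` at `u = 0` gives the
invariance `D_yX₂(τ, z) (V₂ z) = V₂ (X₂ (τ, z))`. By the chain rule, `F′(s)` is the full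
derivative of `X₂` at `(t − s, X₁ (s, y))` applied to `(-1, V₁)`; splitting this vector as
`(0, V₁) - (1, 0)`, the first part is the spatial derivative applied to `V₁` and the second is
the time derivative `V₂ (X₂ (t − s, X₁ (s, y)))`, which by invariance is the spatial derivative
applied to `V₂`. -/

section PartialDerivatives

variable {𝕜 : Type*} [NontriviallyNormedField 𝕜]
  {E : Type*} [NormedAddCommGroup E] [NormedSpace 𝕜 E]
  {F : Type*} [NormedAddCommGroup F] [NormedSpace 𝕜 F]
  {f : 𝕜 × E → F} {τ : 𝕜} {w : E}

theorem fderiv_prodMk_right_apply (hf : DifferentiableAt 𝕜 f (τ, w)) (v : E) :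
    fderiv 𝕜 (fun w => f (τ, w)) w v = fderiv 𝕜 f (τ, w) (0, v) :=
  DFunLike.congr_fun (hf.hasFDerivAt.comp w (hasFDerivAt_prodMk_right τ w)).fderiv v

theorem fderiv_apply_one_zero_of_hasDerivAt (hf : DifferentiableAt 𝕜 f (τ, w)) {f' : F}
    (h : HasDerivAt (fun u => f (u, w)) f' τ) :
    fderiv 𝕜 f (τ, w) (1, 0) = f' :=
  (hf.hasFDerivAt.comp_hasDerivAt τ ((hasDerivAt_id τ).prodMk (hasDerivAt_const τ w))).unique h

end PartialDerivatives

theorem fderiv_flow_apply_vectorField {𝕜 : Type*} [NontriviallyNormedField 𝕜]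
    {E : Type*} [NormedAddCommGroup E] [NormedSpace 𝕜 E] {V : E → E} {X : 𝕜 × E → E}
    (hX0 : ∀ y, X (0, y) = y) (hX : ∀ s y, HasDerivAt (fun t => X (t, y)) (V (X (s, y))) s)
    (hgrp : ∀ s t y, X (t + s, y) = X (t, X (s, y))) {τ : 𝕜} {z : E}
    (hd : DifferentiableAt 𝕜 (fun w => X (τ, w)) z) :
    fderiv 𝕜 (fun w => X (τ, w)) z (V z) = V (X (τ, z)) := by
  have hshift : HasDerivAt (fun u => X (τ + u, z)) (V (X (τ, z))) 0 :=
    HasDerivAt.comp_const_add (f := fun t => X (t, z)) τ 0 (by simpa using hX τ z)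
  have hstart : HasDerivAt (fun u => X (u, z)) (V z) 0 := by simpa only [hX0] using hX 0 z
  have hcomp : HasDerivAt (fun u => X (τ, X (u, z))) (fderiv 𝕜 (fun w => X (τ, w)) z (V z)) 0 :=
    hd.hasFDerivAt.comp_hasDerivAt_of_eq 0 hstart (hX0 z).symm
  simp only [← hgrp] at hcomp
  exact hcomp.unique hshift

theorem flow_mismatch_derivative_simplified_general
    {E : Type*} [NormedAddCommGroup E] [NormedSpace ℝ E]
    (V₁ V₂ : E → E)
    (X₁ X₂ : ℝ × E → E)
    (hX₁ : ∀ (s : ℝ) (y : E), HasDerivAt (fun t : ℝ => X₁ (t, y)) (V₁ (X₁ (s, y))) s)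
    (hX₂0 : ∀ y : E, X₂ (0, y) = y)
    (hX₂ : ∀ (s : ℝ) (y : E), HasDerivAt (fun t : ℝ => X₂ (t, y)) (V₂ (X₂ (s, y))) s)
    (hC1 : ContDiff ℝ 1 X₂)
    (hgrp : ∀ (s t : ℝ) (y : E), X₂ (t + s, y) = X₂ (t, X₂ (s, y)))
    (t : ℝ) (y : E) :
    ∀ s : ℝ,
      HasDerivAt (fun s : ℝ => X₂ (t - s, X₁ (s, y)))
        (fderiv ℝ (fun w : E => X₂ (t - s, w)) (X₁ (s, y))
          (V₁ (X₁ (s, y)) - V₂ (X₁ (s, y)))) s := by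
  intro s
  set z := X₁ (s, y)
  have hd : DifferentiableAt ℝ X₂ (t - s, z) := hC1.differentiable one_ne_zero _
  have hF : HasDerivAt (fun s => X₂ (t - s, X₁ (s, y))) (fderiv ℝ X₂ (t - s, z) (-1, V₁ z)) s :=
    hd.hasFDerivAt.comp_hasDerivAt s (((hasDerivAt_id s).const_sub t).prodMk (hX₁ s y))
  have hinv := fderiv_flow_apply_vectorField hX₂0 hX₂ hgrp
    (hd.comp z (hasFDerivAt_prodMk_right (t - s) z).differentiableAt)
  have hsplit : ((-1 : ℝ), V₁ z) = ((0 : ℝ), V₁ z) - ((1 : ℝ), (0 : E)) := by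
    simp
  rwa [map_sub, hinv, fderiv_prodMk_right_apply hd, ← fderiv_apply_one_zero_of_hasDerivAt hd
    (hX₂ (t - s) z), ← map_sub, ← hsplit]

/-- **Simplified derivative of `F (s) = X₂ (t − s, X₁ (s, y))` via the group property.**
Let `X₁` be a global flow of the continuous vector field `V₁`, and `X₂` a `C¹` global
flow of the continuous vector field `V₂` satisfying the group property.  Then for fixed
`t` and `y`, `F (s) = X₂ (t − s, X₁ (s, y))` is differentiable at every `s` with
`F′(s) = D_yX₂(t − s, X₁(s, y))((V₁ − V₂)(X₁(s, y)))`. -/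
theorem flow_mismatch_derivative_simplified
    {E : Type*} [NormedAddCommGroup E] [NormedSpace ℝ E] [FiniteDimensional ℝ E]
    (V₁ V₂ : E → E) (hV₁ : Continuous V₁) (hV₂ : Continuous V₂)
    (X₁ X₂ : ℝ × E → E)
    (hX₁0 : ∀ y : E, X₁ (0, y) = y)
    (hX₁ : ∀ (s : ℝ) (y : E), HasDerivAt (fun t : ℝ => X₁ (t, y)) (V₁ (X₁ (s, y))) s)
    (hX₂0 : ∀ y : E, X₂ (0, y) = y)
    (hX₂ : ∀ (s : ℝ) (y : E), HasDerivAt (fun t : ℝ => X₂ (t, y)) (V₂ (X₂ (s, y))) s)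
    (hC1 : ContDiff ℝ 1 X₂)
    (hgrp : ∀ (s t : ℝ) (y : E), X₂ (t + s, y) = X₂ (t, X₂ (s, y)))
    (t : ℝ) (y : E) :
    ∀ s : ℝ,
      HasDerivAt (fun s : ℝ => X₂ (t - s, X₁ (s, y)))
        (fderiv ℝ (fun w : E => X₂ (t - s, w)) (X₁ (s, y))
          (V₁ (X₁ (s, y)) - V₂ (X₁ (s, y)))) s :=
  flow_mismatch_derivative_simplified_general V₁ V₂ X₁ X₂ hX₁ hX₂0 hX₂ hC1 hgrp t y
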